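/- Let G ⊆ SL(3,ℂ) be the subgroup of matrices [[t⁻²,0,0],[s₀,t,0],[s₁,0,t]] with t ∈ ℂ ∖ {0} and s₀,s₁ ∈ ℂ. For any line ℓ of ℙ²(ℂ) with ℓ ≠ l_A, the orbit {g(ℓ) : g ∈ G} is exactly the set of lines ℓ' of ℙ²(ℂ) with ℓ' ≠ l_A and ℓ' ∩ l_A = ℓ ∩ l_A. In particular, the intersection point of a line with l_A is invariant under the action of G, and G acts transitively on the set of lines through any fixed point of l_A other than l_A itself. -/

import Mathlib

noncomputable section

/-- The complex projective plane `ℙ²(ℂ)`. -/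
abbrev P2 : Type := Projectivization ℂ (Fin 3 → ℂ)

/-- The group `SL(3,ℂ)`. -/
abbrev SL3 : Type := Matrix.SpecialLinearGroup (Fin 3) ℂ

/-- The induced action of `g ∈ SL(3,ℂ)` on `ℙ²(ℂ)`, via the linear action of `g`
on column vectors `(x0,x1,x2)ᵀ`. -/
def act (g : SL3) : P2 → P2 :=
  Projectivization.map (Matrix.SpecialLinearGroup.toLin' g).toLinearMap
    (Matrix.SpecialLinearGroup.toLin' g).injective

/-- The line `{[x0:x1:x2] ∈ ℙ²(ℂ) : b0·x0 + b1·x1 + b2·x2 = 0}` determined by the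
linear form with coefficients `b`. -/
def lineSet (b : Fin 3 → ℂ) : Set P2 :=
  {p : P2 | b 0 * p.rep 0 + b 1 * p.rep 1 + b 2 * p.rep 2 = 0}

/-- The line `l_A = {x0 = 0}`. -/
def lA : Set P2 := lineSet ![1, 0, 0]

/-- A subset of `ℙ²(ℂ)` is a line if it is the zero set of a nonzero linear form. -/
def IsLine (L : Set P2) : Prop := ∃ b : Fin 3 → ℂ, b ≠ 0 ∧ L = lineSet b

/-- The subgroup `G ⊆ SL(3,ℂ)` of matrices `[[t⁻²,0,0],[s₀,t,0],[s₁,0,t]]`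
with `t ≠ 0`, i.e. the pointwise stabilizer of `l_A`. -/
def Gset : Set SL3 :=
  {g : SL3 | ∃ t s₀ s₁ : ℂ, t ≠ 0 ∧
    (g : Matrix (Fin 3) (Fin 3) ℂ) = !![(t ^ 2)⁻¹, 0, 0; s₀, t, 0; s₁, 0, t]}

/-! Every `g ∈ G` acts on `l_A = {x0 = 0}` as the scalar `t`, so it fixes `l_A` pointwise; hence
it preserves the point where a line meets `l_A` and cannot move a line onto `l_A`. Conversely a
line `b ≠ l_A` meets `l_A` in the point `b ⨯₃ (1, 0, 0) = (0, b₂, -b₁)`, so two such lines `b`, `c`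
through the same point of `l_A` have `(c₁, c₂) = a (b₁, b₂)`. An element of `G` with `t = 1`
transforms coefficient vectors by `c ↦ c ᵥ* g`, which adds an arbitrary combination of `c₁, c₂`
to `c₀`, and so can make `c` proportional to `b`. -/

open Matrix Projectivization

lemma mem_lineSet_mk {b v : Fin 3 → ℂ} (hv : v ≠ 0) : mk ℂ v hv ∈ lineSet b ↔ b ⬝ᵥ v = 0 := by
  obtain ⟨a, ha⟩ := exists_smul_eq_mk_rep ℂ v hv
  have hrep : b 0 * (mk ℂ v hv).rep 0 + b 1 * (mk ℂ v hv).rep 1 + b 2 * (mk ℂ v hv).rep 2 =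
      (a : ℂ) * (b ⬝ᵥ v) := by
    rw [← ha, dotProduct, Fin.sum_univ_three]
    simp only [Pi.smul_apply, Units.smul_def, smul_eq_mul]
    ring
  simp only [lineSet, Set.mem_ofPred_eq, hrep, mul_eq_zero, a.ne_zero, false_or]

lemma lineSet_smul {a : ℂ} (ha : a ≠ 0) (b : Fin 3 → ℂ) : lineSet (a • b) = lineSet b := by
  ext p
  induction p using Projectivization.ind with
  | h v hv => simp [mem_lineSet_mk, smul_dotProduct, ha]

lemma lineSet_eq_of_cross_eq_zero {b c : Fin 3 → ℂ} (hb : b ≠ 0) (hc : c ≠ 0) (h : b ⨯₃ c = 0) :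
    lineSet b = lineSet c := by
  obtain ⟨a, rfl⟩ :=
    (mk_eq_mk_iff' ℂ b c hb hc).mp ((mk_eq_mk_iff_crossProduct_eq_zero hb hc).mpr h)
  exact lineSet_smul (left_ne_zero_of_smul hb) c

lemma lineSet_inter_lineSet_eq_singleton {b c : Fin 3 → ℂ} (h : b ⨯₃ c ≠ 0) :
    lineSet b ∩ lineSet c = {mk ℂ (b ⨯₃ c) h} := by
  ext p
  induction p using Projectivization.ind with
  | h v hv =>
  rw [Set.mem_inter_iff, mem_lineSet_mk, mem_lineSet_mk, Set.mem_singleton_iff]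
  constructor
  · rintro ⟨hbv, hcv⟩
    rw [mk_eq_mk_iff_crossProduct_eq_zero, cross_cross_eq_smul_sub_smul', dotProduct_comm, hcv,
      hbv, zero_smul, zero_smul, sub_zero]
  · intro hv'
    obtain ⟨a, rfl⟩ := (mk_eq_mk_iff' ℂ v _ hv h).mp hv'
    simp only [dotProduct_smul, dot_self_cross, dot_cross_self, smul_zero, and_self]

lemma cross_one_zero_zero (b : Fin 3 → ℂ) : b ⨯₃ ![1, 0, 0] = ![0, b 2, -b 1] := by
  simp [cross_apply]

lemma cross_one_zero_zero_ne_zero_of_lineSet_ne_lA {b : Fin 3 → ℂ} (hb : b ≠ 0)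
    (hbA : lineSet b ≠ lA) : b ⨯₃ ![1, 0, 0] ≠ 0 :=
  fun h => hbA (lineSet_eq_of_cross_eq_zero hb (by simp) h)

lemma Matrix.SpecialLinearGroup.mulVec_ne_zero {n R : Type*} [Fintype n] [DecidableEq n]
    [CommRing R] (g : SpecialLinearGroup n R) {v : n → R} (hv : v ≠ 0) :
    (g : Matrix n n R) *ᵥ v ≠ 0 := by
  intro h
  apply hv
  simpa [mulVec_mulVec, adjugate_mul] using congrArg ((↑g⁻¹ : Matrix n n R) *ᵥ ·) h

lemma act_mk (g : SL3) {v : Fin 3 → ℂ} (hv : v ≠ 0) :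
    act g (mk ℂ v hv) =
      mk ℂ ((g : Matrix (Fin 3) (Fin 3) ℂ) *ᵥ v) (SpecialLinearGroup.mulVec_ne_zero g hv) :=
  rfl

lemma act_injective (g : SL3) : Function.Injective (act g) :=
  map_injective _ _

lemma act_surjective (g : SL3) : Function.Surjective (act g) := by
  intro p
  induction p using Projectivization.ind with
  | h w hw =>
  refine ⟨mk ℂ _ (SpecialLinearGroup.mulVec_ne_zero g⁻¹ hw), ?_⟩
  simp [act_mk, mulVec_mulVec, mul_adjugate]

lemma preimage_act_lineSet (g : SL3) (b : Fin 3 → ℂ) :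
    act g ⁻¹' lineSet b = lineSet (b ᵥ* (g : Matrix (Fin 3) (Fin 3) ℂ)) := by
  ext p
  induction p using Projectivization.ind with
  | h v hv => rw [Set.mem_preimage, act_mk, mem_lineSet_mk, mem_lineSet_mk, dotProduct_mulVec]

lemma image_act_lineSet_vecMul (g : SL3) (b : Fin 3 → ℂ) :
    act g '' lineSet (b ᵥ* (g : Matrix (Fin 3) (Fin 3) ℂ)) = lineSet b := by
  rw [← preimage_act_lineSet, Set.image_preimage_eq _ (act_surjective g)]

lemma isLine_image_act (g : SL3) {L : Set P2} (hL : IsLine L) : IsLine (act g '' L) := by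
  obtain ⟨b, hb, rfl⟩ := hL
  have hb' : b ᵥ* (↑g⁻¹ : Matrix (Fin 3) (Fin 3) ℂ) ᵥ* ↑g = b := by
    simp [vecMul_vecMul, adjugate_mul]
  refine ⟨b ᵥ* ↑g⁻¹, fun h => hb ?_, ?_⟩
  · rw [← hb', h, zero_vecMul]
  · conv_lhs => rw [← hb']
    exact image_act_lineSet_vecMul g _

lemma act_eq_self_of_mem_lA {g : SL3} (hg : g ∈ Gset) {p : P2} (hp : p ∈ lA) : act g p = p := by
  obtain ⟨t, s₀, s₁, ht, hg⟩ := hg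
  induction p using Projectivization.ind with
  | h v hv =>
  rw [lA, mem_lineSet_mk] at hp
  have hv0 : v 0 = 0 := by simpa [dotProduct, Fin.sum_univ_three] using hp
  have hgv : (g : Matrix (Fin 3) (Fin 3) ℂ) *ᵥ v = t • v := by
    ext i
    fin_cases i <;> simp [hg, mulVec, dotProduct, Fin.sum_univ_three, hv0]
  rw [act_mk, mk_eq_mk_iff', hgv]
  exact ⟨t, rfl⟩

lemma image_act_lA {g : SL3} (hg : g ∈ Gset) : act g '' lA = lA := by
  rw [Set.image_congr fun p hp => act_eq_self_of_mem_lA hg hp, Set.image_id']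

lemma image_act_inter_lA {g : SL3} (hg : g ∈ Gset) (L : Set P2) :
    act g '' L ∩ lA = L ∩ lA := by
  conv_lhs => rw [← image_act_lA hg, ← Set.image_inter (act_injective g)]
  rw [Set.image_congr fun p hp => act_eq_self_of_mem_lA hg hp.2, Set.image_id']

lemma image_act_ne_lA {g : SL3} (hg : g ∈ Gset) {L : Set P2} (hL : L ≠ lA) : act g '' L ≠ lA := by
  rw [← image_act_lA hg]
  exact fun h => hL ((act_injective g).image_injective h)

lemma exists_dotProduct_eq {K m : Type*} [Field K] [Fintype m] {w : m → K} (hw : w ≠ 0) (r : K) :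
    ∃ s : m → K, s ⬝ᵥ w = r := by
  rw [ne_eq, ← dotProduct_eq_zero_iff, not_forall] at hw
  obtain ⟨u, hu⟩ := hw
  rw [dotProduct_comm] at hu
  exact ⟨(r / (u ⬝ᵥ w)) • u, by rw [smul_dotProduct, smul_eq_mul, div_mul_cancel₀ r hu]⟩

def unipotent (s : Fin 2 → ℂ) : SL3 :=
  ⟨!![1, 0, 0; s 0, 1, 0; s 1, 0, 1], by simp [det_fin_three]⟩

lemma unipotent_mem_Gset (s : Fin 2 → ℂ) : unipotent s ∈ Gset :=
  ⟨1, s 0, s 1, one_ne_zero, by simp [unipotent]⟩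

lemma vecMul_unipotent (c : Fin 3 → ℂ) (s : Fin 2 → ℂ) :
    c ᵥ* (unipotent s : Matrix (Fin 3) (Fin 3) ℂ) = ![c 0 + s ⬝ᵥ ![c 1, c 2], c 1, c 2] := by
  ext i
  fin_cases i <;> simp [unipotent, vecMul, dotProduct, Fin.sum_univ_three, Fin.sum_univ_two]; ring

lemma exists_mem_Gset_image_eq {b c : Fin 3 → ℂ} (hb : b ≠ 0) (hc : c ≠ 0) (hbA : lineSet b ≠ lA)
    (hcA : lineSet c ≠ lA) (h : lineSet c ∩ lA = lineSet b ∩ lA) :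
    ∃ g ∈ Gset, act g '' lineSet b = lineSet c := by
  have hb0 := cross_one_zero_zero_ne_zero_of_lineSet_ne_lA hb hbA
  have hc0 := cross_one_zero_zero_ne_zero_of_lineSet_ne_lA hc hcA
  rw [lA, lineSet_inter_lineSet_eq_singleton hb0, lineSet_inter_lineSet_eq_singleton hc0,
    Set.singleton_eq_singleton_iff, mk_eq_mk_iff'] at h
  obtain ⟨a, ha⟩ := h
  have ha0 : a ≠ 0 := by rintro rfl; exact hc0 (by rw [← ha, zero_smul])
  simp only [cross_one_zero_zero] at ha hc0
  have hc1 : a * b 1 = c 1 := by simpa using congrFun ha 2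
  have hc2 : a * b 2 = c 2 := by simpa using congrFun ha 1
  obtain ⟨s, hs⟩ := exists_dotProduct_eq (w := ![c 1, c 2])
    (by simpa [funext_iff, Fin.forall_fin_succ, and_comm] using hc0) (a * b 0 - c 0)
  refine ⟨unipotent s, unipotent_mem_Gset s, ?_⟩
  have hcs : c ᵥ* (unipotent s : Matrix (Fin 3) (Fin 3) ℂ) = a • b := by
    rw [vecMul_unipotent, hs]
    ext i
    fin_cases i <;> simp [← hc1, ← hc2]
  rw [← lineSet_smul ha0 b, ← hcs, image_act_lineSet_vecMul]

/-- for any line `ℓ ≠ l_A` of `ℙ²(ℂ)`, the `G`-orbit `{g(ℓ) : g ∈ G}` is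
exactly the set of lines `ℓ' ≠ l_A` with `ℓ' ∩ l_A = ℓ ∩ l_A`.  In particular the
intersection point with `l_A` is `G`-invariant and `G` acts transitively on the lines
other than `l_A` through any fixed point of `l_A`. -/
theorem stmt11 (L : Set P2) (hL : IsLine L) (hLA : L ≠ lA) :
    {L' : Set P2 | ∃ g ∈ Gset, L' = act g '' L} =
      {L' : Set P2 | IsLine L' ∧ L' ≠ lA ∧ L' ∩ lA = L ∩ lA} ∧
    ∀ g ∈ Gset, (act g '' L) ∩ lA = L ∩ lA := by
  refine ⟨Set.ext fun L' => ⟨?_, ?_⟩, fun g hg => image_act_inter_lA hg L⟩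
  · rintro ⟨g, hg, rfl⟩
    exact ⟨isLine_image_act g hL, image_act_ne_lA hg hLA, image_act_inter_lA hg L⟩
  · rintro ⟨⟨c, hc, rfl⟩, hcA, h⟩
    obtain ⟨b, hb, rfl⟩ := hL
    obtain ⟨g, hg, hgc⟩ := exists_mem_Gset_image_eq hb hc hLA hcA h
    exact ⟨g, hg, hgc.symm⟩
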